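/- Let K be a field, (A,Φ) a linear extended associative semigroup over K, and a,b ∈ A. The following are equivalent: (i) for every Φ-associative algebra (V,*) over K, the bilinear product m on V defined by m(x,y) = x *_a y + y *_b x is associative; (ii) either b = 0 and Φ(a ⊗ a) = a ⊗ a, or a = 0 and Φ(b ⊗ b) = b ⊗ b. -/

import Mathlib

open TensorProduct

section Defs

variable (K : Type) [Field K]
variable (A : Type) [AddCommGroup A] [Module K A]

/-- The "right reassociated" version of `Φ ⊗ Id` acting on `A ⊗ (A ⊗ A)`. -/
noncomputable def phiIdMap (Φ : A ⊗[K] A →ₗ[K] A ⊗[K] A) :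
    A ⊗[K] (A ⊗[K] A) →ₗ[K] A ⊗[K] (A ⊗[K] A) :=
  (TensorProduct.assoc K A A A).toLinearMap ∘ₗ (LinearMap.rTensor A Φ) ∘ₗ
    (TensorProduct.assoc K A A A).symm.toLinearMap

/-- `(A, Φ)` is a linear extended associative semigroup (ℓEAS):
`(Id ⊗ Φ) ∘ (Φ ⊗ Id) ∘ (Id ⊗ Φ) = (Φ ⊗ Id) ∘ (Id ⊗ τ) ∘ (Φ ⊗ Id)` on `A^{⊗3}`. -/
def IsLEAS (Φ : A ⊗[K] A →ₗ[K] A ⊗[K] A) : Prop :=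
  (LinearMap.lTensor A Φ) ∘ₗ phiIdMap K A Φ ∘ₗ (LinearMap.lTensor A Φ)
    = phiIdMap K A Φ ∘ₗ (LinearMap.lTensor A (TensorProduct.comm K A A).toLinearMap) ∘ₗ
        phiIdMap K A Φ

variable (V : Type) [AddCommGroup V] [Module K V]

/-- Evaluation `a ⊗ (x ⊗ y) ↦ x *_a y` of a family of products `st`. -/
noncomputable def evalSt (st : A →ₗ[K] V →ₗ[K] V →ₗ[K] V) :
    A ⊗[K] (V ⊗[K] V) →ₗ[K] V :=
  TensorProduct.lift ((TensorProduct.lift.equiv (RingHom.id K) V V V).toLinearMap ∘ₗ st)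

/-- The Sweedler-type trilinear evaluation
`(c ⊗ d) ⊗ ((x ⊗ y) ⊗ z) ↦ (x *_d y) *_c z`. -/
noncomputable def rightTri (st : A →ₗ[K] V →ₗ[K] V →ₗ[K] V) :
    (A ⊗[K] A) ⊗[K] ((V ⊗[K] V) ⊗[K] V) →ₗ[K] V :=
  evalSt K A V st
    ∘ₗ (TensorProduct.leftComm K V A V).toLinearMap
    ∘ₗ (TensorProduct.map (evalSt K A V st) LinearMap.id)
    ∘ₗ (TensorProduct.tensorTensorTensorComm K A A (V ⊗[K] V) V).toLinearMap
    ∘ₗ (LinearMap.rTensor ((V ⊗[K] V) ⊗[K] V) (TensorProduct.comm K A A).toLinearMap)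

/-- `(V, st)` is a `Φ`-associative algebra:
`x *_a (y *_b z) = Σ (x *_{d_i} y) *_{c_i} z` where `Φ(a ⊗ b) = Σ c_i ⊗ d_i`. -/
def IsPhiAssoc (Φ : A ⊗[K] A →ₗ[K] A ⊗[K] A)
    (st : A →ₗ[K] V →ₗ[K] V →ₗ[K] V) : Prop :=
  ∀ (a b : A) (x y z : V),
    st a x (st b y z) = rightTri K A V st ((Φ (a ⊗ₜ b)) ⊗ₜ ((x ⊗ₜ y) ⊗ₜ z))

/-- The space `T_A(V) = ⊕_{n≥1} A^{⊗(n−1)} ⊗ V^{⊗n}` of `A`-typed words, modelled as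
`V ⊗ T(A ⊗ V)`: the typed word `a₁…a_{n−1}x₁…x_n` is `x₁ ⊗ (a₁⊗x₂)⋯(a_{n−1}⊗x_n)`. -/
abbrev TAlg : Type := V ⊗[K] TensorAlgebra K (A ⊗[K] V)

/-- The inclusion of `V` in `T_A(V)` as typed words of length one. -/
noncomputable def iotaTA : V →ₗ[K] TAlg K A V :=
  (TensorProduct.mk K V (TensorAlgebra K (A ⊗[K] V))).flip 1

/-- The appending operation: `appTA (a ⊗ z) u = u · (a z)`. -/
noncomputable def appTA : (A ⊗[K] V) →ₗ[K] (TAlg K A V →ₗ[K] TAlg K A V) :=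
  (LinearMap.lTensorHom V)
    ∘ₗ (LinearMap.mul K (TensorAlgebra K (A ⊗[K] V))).flip
    ∘ₗ (TensorAlgebra.ι K)

/-- The Sweedler-type map `(c ⊗ d) ⊗ ((u ⊗ v) ⊗ z) ↦ (u *_d v) · (c z)` used in the
recursive definition of the products on `T_A(V)`. -/
noncomputable def recTA (st : A →ₗ[K] TAlg K A V →ₗ[K] TAlg K A V →ₗ[K] TAlg K A V) :
    (A ⊗[K] A) ⊗[K] ((TAlg K A V ⊗[K] TAlg K A V) ⊗[K] V) →ₗ[K] TAlg K A V :=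
  (TensorProduct.lift (appTA K A V).flip)
    ∘ₗ (TensorProduct.map (evalSt K A (TAlg K A V) st) (LinearMap.id (M := A ⊗[K] V)))
    ∘ₗ (TensorProduct.tensorTensorTensorComm K A A (TAlg K A V ⊗[K] TAlg K A V) V).toLinearMap
    ∘ₗ (LinearMap.rTensor ((TAlg K A V ⊗[K] TAlg K A V) ⊗[K] V)
          (TensorProduct.comm K A A).toLinearMap)

/-- `st` satisfies the defining recursion of the products `*_a` of `T_A(V)`:
`u *_a z = u·(a z)` for `z ∈ V`, and `u *_a (v·(b z)) = Σ (u *_{d_i} v)·(c_i z)`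
where `Φ(a ⊗ b) = Σ c_i ⊗ d_i`. -/
def SatisfiesRecTA (Φ : A ⊗[K] A →ₗ[K] A ⊗[K] A)
    (st : A →ₗ[K] TAlg K A V →ₗ[K] TAlg K A V →ₗ[K] TAlg K A V) : Prop :=
  (∀ (a : A) (u : TAlg K A V) (z : V), st a u (iotaTA K A V z) = appTA K A V (a ⊗ₜ z) u) ∧
  (∀ (a b : A) (u v : TAlg K A V) (z : V),
    st a u (appTA K A V (b ⊗ₜ z) v)
      = recTA K A V st ((Φ (a ⊗ₜ b)) ⊗ₜ ((u ⊗ₜ v) ⊗ₜ z)))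

/-- The Sweedler-type map `(x ⊗ y) ⊗ (c ⊗ d) ↦ (x *_d y) ⊗ c` used to define the
associative product `⋆` on `V ⊗ A`. -/
noncomputable def sweedlerMul (st : A →ₗ[K] V →ₗ[K] V →ₗ[K] V) :
    (V ⊗[K] V) ⊗[K] (A ⊗[K] A) →ₗ[K] V ⊗[K] A :=
  (LinearMap.rTensor A
      (evalSt K A V st ∘ₗ (TensorProduct.comm K (V ⊗[K] V) A).toLinearMap))
    ∘ₗ (TensorProduct.assoc K (V ⊗[K] V) A A).symm.toLinearMap
    ∘ₗ (LinearMap.lTensor (V ⊗[K] V) (TensorProduct.comm K A A).toLinearMap)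

end Defs

/-!
If `b = 0` then `m = *_a`, and `x *_a (y *_a z) = (x *_a y) *_a z` is exactly what
`Φ`-associativity gives when `Φ (a ⊗ a) = a ⊗ a`; the case `a = 0` is the mirror image.
Conversely, test associativity of `m` on the free `Φ`-associative algebra on three generators
`x, y, z`, truncated above degree three. In the degree-three part of the associator the words
`(x y) z`, `(y x) z` and `(z y) x` carry the coefficients `a ⊗ a - τ Φ (a ⊗ a)`, `b ⊗ a` and
`τ Φ (b ⊗ b) - b ⊗ b`, so all three vanish, and over a field `b ⊗ a = 0` forces `a = 0` or
`b = 0`.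
-/

theorem TensorProduct.eq_zero_or_eq_zero_of_tmul_eq_zero {K M N : Type} [Field K]
    [AddCommGroup M] [Module K M] [AddCommGroup N] [Module K N] {m : M} {n : N}
    (h : m ⊗ₜ[K] n = 0) : m = 0 ∨ n = 0 := by
  by_contra! hmn
  obtain ⟨φ, hφ⟩ : ∃ φ : Module.Dual K M, φ m ≠ 0 := by
    by_contra! h
    exact hmn.1 ((Module.forall_dual_apply_eq_zero_iff K m).1 h)
  obtain ⟨ψ, hψ⟩ : ∃ ψ : Module.Dual K N, ψ n ≠ 0 := by
    by_contra! h
    exact hmn.2 ((Module.forall_dual_apply_eq_zero_iff K n).1 h)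
  have h' := congrArg (TensorProduct.lift ((LinearMap.mul K K ∘ₗ φ).compl₂ ψ)) h
  simp only [lift.tmul, LinearMap.compl₂_apply, LinearMap.comp_apply, LinearMap.mul_apply',
    map_zero] at h'
  exact mul_ne_zero hφ hψ h'

section PhiAssoc

variable {K A V : Type} [Field K] [AddCommGroup A] [Module K A] [AddCommGroup V] [Module K V]

theorem rightTri_tmul (st : A →ₗ[K] V →ₗ[K] V →ₗ[K] V) (c d : A) (x y z : V) :
    rightTri K A V st ((c ⊗ₜ d) ⊗ₜ ((x ⊗ₜ y) ⊗ₜ z)) = st c (st d x y) z := by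
  simp [rightTri, evalSt, tensorTensorTensorComm, leftComm]

/-- The product `m (x, y) = x *_a y + y *_b x`. -/
def mixedProduct (st : A →ₗ[K] V →ₗ[K] V →ₗ[K] V) (a b : A) : V →ₗ[K] V →ₗ[K] V :=
  st a + (st b).flip

variable {Φ : A ⊗[K] A →ₗ[K] A ⊗[K] A} {st : A →ₗ[K] V →ₗ[K] V →ₗ[K] V}

theorem IsPhiAssoc.assoc_of_map_tmul_self (hst : IsPhiAssoc K A V Φ st) {a : A}
    (ha : Φ (a ⊗ₜ a) = a ⊗ₜ a) (x y z : V) :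
    st a (st a x y) z = st a x (st a y z) := by
  rw [hst, ha, rightTri_tmul]

theorem IsPhiAssoc.mixedProduct_zero_right_assoc (hst : IsPhiAssoc K A V Φ st) {a : A}
    (ha : Φ (a ⊗ₜ a) = a ⊗ₜ a) (x y z : V) :
    mixedProduct st a 0 (mixedProduct st a 0 x y) z
      = mixedProduct st a 0 x (mixedProduct st a 0 y z) := by
  simpa [mixedProduct] using hst.assoc_of_map_tmul_self ha x y z

theorem IsPhiAssoc.mixedProduct_zero_left_assoc (hst : IsPhiAssoc K A V Φ st) {b : A}
    (hb : Φ (b ⊗ₜ b) = b ⊗ₜ b) (x y z : V) :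
    mixedProduct st 0 b (mixedProduct st 0 b x y) z
      = mixedProduct st 0 b x (mixedProduct st 0 b y z) := by
  simpa [mixedProduct] using (hst.assoc_of_map_tmul_self hb z y x).symm

end PhiAssoc

/-- The free `Φ`-associative algebra on generators `ι`, truncated above degree three. A word
`x_i *_α x_j` is stored as `α` at `(i, j)`, and a word `(x_i *_d x_j) *_c x_k` as `d ⊗ c` at
`(i, j, k)`. -/
abbrev TruncFree (K A ι : Type) [Field K] [AddCommGroup A] [Module K A] : Type :=
  (ι → K) × (ι → ι → A) × (ι → ι → ι → A ⊗[K] A)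

namespace TruncFree

variable {K A : Type} [Field K] [AddCommGroup A] [Module K A] (Φ : A ⊗[K] A →ₗ[K] A ⊗[K] A)
  {ι : Type}

/-- A degree-one element times a degree-two word is rewritten by
`x_i *_α (x_j *_β x_k) = Σ (x_i *_d x_j) *_c x_k` with `Φ (α ⊗ β) = Σ c ⊗ d`; this is where
`τ ∘ Φ` comes from. -/
noncomputable def mul :
    A →ₗ[K] TruncFree K A ι →ₗ[K] TruncFree K A ι →ₗ[K] TruncFree K A ι where
  toFun α := LinearMap.mk₂ K (fun x y => (0, fun i j => (x.1 i * y.1 j) • α,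
      fun i j k => x.2.1 i j ⊗ₜ (y.1 k • α)
        + x.1 i • TensorProduct.comm K A A (Φ (α ⊗ₜ y.2.1 j k))))
    (by intros; ext <;> simp [add_mul, add_smul, add_tmul]; abel)
    (by
      intros
      ext <;> simp [mul_assoc, ← smul_tmul', tmul_smul, smul_add, smul_smul, mul_comm])
    (by intros; ext <;> simp [mul_add, add_smul, tmul_add]; abel)
    (by intros; ext <;> simp [mul_left_comm, tmul_smul, smul_add, smul_smul, mul_comm])
  map_add' α β := by
    refine LinearMap.ext₂ fun x y => ?_
    simp only [LinearMap.add_apply, LinearMap.mk₂_apply]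
    ext <;> simp [smul_add, tmul_add, add_tmul]
    abel
  map_smul' c α := by
    refine LinearMap.ext₂ fun x y => ?_
    simp only [LinearMap.smul_apply, LinearMap.mk₂_apply, RingHom.id_apply]
    ext <;> simp [smul_add, tmul_smul, ← smul_tmul', smul_smul, mul_comm]

@[simp]
theorem mul_apply (α : A) (x y : TruncFree K A ι) :
    mul Φ α x y = (0, fun i j => (x.1 i * y.1 j) • α,
      fun i j k => x.2.1 i j ⊗ₜ (y.1 k • α)
        + x.1 i • TensorProduct.comm K A A (Φ (α ⊗ₜ y.2.1 j k))) :=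
  rfl

theorem rightTri_mul (w : A ⊗[K] A) (x y z : TruncFree K A ι) :
    rightTri K A _ (mul Φ) (w ⊗ₜ ((x ⊗ₜ y) ⊗ₜ z))
      = (0, 0, fun i j k => (x.1 i * y.1 j * z.1 k) • TensorProduct.comm K A A w) := by
  induction w using TensorProduct.induction_on with
  | zero => ext <;> simp
  | tmul c d =>
    rw [rightTri_tmul]
    ext <;> simp [← smul_tmul', tmul_smul, smul_smul, mul_comm]
  | add w₁ w₂ h₁ h₂ =>
    rw [add_tmul, map_add, h₁, h₂]
    ext <;> simp

theorem isPhiAssoc_mul : IsPhiAssoc K A (TruncFree K A ι) Φ (mul Φ) := by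
  intro a b x y z
  rw [rightTri_mul]
  ext <;> simp [mul_assoc, smul_smul]

theorem map_tmul_self_and_tmul_eq_zero_of_mixedProduct_assoc {a b : A}
    (H : ∀ x y z : TruncFree K A (Fin 3),
      mixedProduct (mul Φ) a b (mixedProduct (mul Φ) a b x y) z
        = mixedProduct (mul Φ) a b x (mixedProduct (mul Φ) a b y z)) :
    Φ (a ⊗ₜ a) = a ⊗ₜ a ∧ b ⊗ₜ[K] a = 0 ∧ Φ (b ⊗ₜ b) = b ⊗ₜ b := by
  have hτ (t : A) : Φ (t ⊗ₜ t) = t ⊗ₜ t ↔ TensorProduct.comm K A A (Φ (t ⊗ₜ t)) = t ⊗ₜ t := by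
    rw [← (TensorProduct.comm K A A).injective.eq_iff, comm_tmul]
  have E := congrArg (fun v => v.2.2)
    (H (Pi.single 0 1, 0, 0) (Pi.single 1 1, 0, 0) (Pi.single 2 1, 0, 0))
  simp only [mixedProduct, LinearMap.add_apply, LinearMap.flip_apply] at E
  refine ⟨(hτ a).2 ?_, ?_, (hτ b).2 ?_⟩
  · simpa [Pi.single_apply] using (congrFun (congrFun (congrFun E 0) 1) 2).symm
  · simpa [Pi.single_apply] using congrFun (congrFun (congrFun E 1) 0) 2
  · simpa [Pi.single_apply] using congrFun (congrFun (congrFun E 2) 1) 0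

end TruncFree

theorem associative_products_iff_general
    (K : Type) [Field K] (A : Type) [AddCommGroup A] [Module K A]
    (Φ : A ⊗[K] A →ₗ[K] A ⊗[K] A) (a b : A) :
    (∀ (V : ModuleCat K) (st : A →ₗ[K] V →ₗ[K] V →ₗ[K] V),
        IsPhiAssoc K A V Φ st →
        ∀ x y z : V,
          st a (st a x y + st b y x) z + st b z (st a x y + st b y x)
            = st a x (st a y z + st b z y) + st b (st a y z + st b z y) x) ↔
      ((b = 0 ∧ Φ (a ⊗ₜ a) = a ⊗ₜ a) ∨ (a = 0 ∧ Φ (b ⊗ₜ b) = b ⊗ₜ b)) := by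
  constructor
  · intro H
    obtain ⟨ha, hba, hb⟩ := TruncFree.map_tmul_self_and_tmul_eq_zero_of_mixedProduct_assoc Φ
      (H (ModuleCat.of K (TruncFree K A (Fin 3))) _ (TruncFree.isPhiAssoc_mul Φ))
    rcases eq_zero_or_eq_zero_of_tmul_eq_zero hba with rfl | rfl
    exacts [.inl ⟨rfl, ha⟩, .inr ⟨rfl, hb⟩]
  · rintro (⟨rfl, ha⟩ | ⟨rfl, hb⟩) V st hst
    exacts [hst.mixedProduct_zero_right_assoc ha, hst.mixedProduct_zero_left_assoc hb]

/-- Proposition 3.18, associative products. Let `(A, Φ)` be a linear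
extended associative semigroup and `a, b ∈ A`. The following are equivalent:
(i) for every `Φ`-associative algebra `(V, *)`, the product `m(x,y) = x *_a y + y *_b x`
is associative;
(ii) either `b = 0` and `Φ(a⊗a) = a⊗a`, or `a = 0` and `Φ(b⊗b) = b⊗b`. -/
theorem associative_products_iff
    (K : Type) [Field K] (A : Type) [AddCommGroup A] [Module K A]
    (Φ : A ⊗[K] A →ₗ[K] A ⊗[K] A) (hΦ : IsLEAS K A Φ) (a b : A) :
    (∀ (V : ModuleCat K) (st : A →ₗ[K] V →ₗ[K] V →ₗ[K] V),
        IsPhiAssoc K A V Φ st →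
        ∀ x y z : V,
          st a (st a x y + st b y x) z + st b z (st a x y + st b y x)
            = st a x (st a y z + st b z y) + st b (st a y z + st b z y) x) ↔
      ((b = 0 ∧ Φ (a ⊗ₜ a) = a ⊗ₜ a) ∨ (a = 0 ∧ Φ (b ⊗ₜ b) = b ⊗ₜ b)) :=
  associative_products_iff_general K A Φ a b
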